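/- Let G and H be nontrivial graphs. If G belongs to the class 𝒢 (or symmetrically H does), then edim(G ∨ H) = |V(G)| + |V(H)| - 1. -/

import Mathlib

open SimpleGraph

variable {V W : Type*}

/-- Distance (in `ℕ∞`) from a vertex to an edge: the minimum of the distances
to the two endpoints. -/
noncomputable def edgeDist (G : SimpleGraph V) (v : V) (e : Sym2 V) : ℕ∞ :=
  Sym2.lift ⟨fun a b => min (G.edist v a) (G.edist v b),
    fun a b => min_comm _ _⟩ e

/-- A set of vertices is an edge metric generator if every pair of distinct
edges is distinguished by some vertex of the set. -/
def IsEdgeMetricGenerator (G : SimpleGraph V) (S : Set V) : Prop :=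
  ∀ e₁ ∈ G.edgeSet, ∀ e₂ ∈ G.edgeSet, e₁ ≠ e₂ →
    ∃ w ∈ S, edgeDist G w e₁ ≠ edgeDist G w e₂

/-- The edge metric dimension: minimum cardinality of an edge metric generator. -/
noncomputable def edim (G : SimpleGraph V) : ℕ :=
  sInf {n | ∃ S : Set V, S.ncard = n ∧ IsEdgeMetricGenerator G S}


/-- The join of two graphs: disjoint union plus all edges across. -/
def joinGraph (G : SimpleGraph V) (H : SimpleGraph W) : SimpleGraph (V ⊕ W) where
  Adj x y := match x, y with
    | .inl a, .inl b => G.Adj a b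
    | .inr a, .inr b => H.Adj a b
    | .inl _, .inr _ => True
    | .inr _, .inl _ => True
  symm := ⟨by rintro (a | a) (b | b) h <;> simp_all [SimpleGraph.adj_comm]⟩
  loopless := ⟨by
    rintro (a | a) h
    · exact G.loopless.irrefl a h
    · exact H.loopless.irrefl a h⟩

/-- A total dominating set: every vertex has a neighbor in the set. -/
def IsTotalDomSet (G : SimpleGraph V) (D : Set V) : Prop :=
  ∀ v : V, ∃ d ∈ D, G.Adj v d

/-- The total domination number. -/
noncomputable def totalDomNum (G : SimpleGraph V) : ℕ :=
  sInf {n | ∃ D : Set V, D.ncard = n ∧ IsTotalDomSet G D}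

/-- The class 𝒢: for every vertex `u` there is a neighbor `v`
such that `{u, v}` is a minimum total dominating set. -/
def InClassG (G : SimpleGraph V) : Prop :=
  ∀ u : V, ∃ v : V, G.Adj u v ∧ IsTotalDomSet G {u, v} ∧
    ({u, v} : Set V).ncard = totalDomNum G

/-- Lexicographic product `G[H]`. -/
def lexProd (G : SimpleGraph V) (H : SimpleGraph W) : SimpleGraph (V × W) where
  Adj x y := G.Adj x.1 y.1 ∨ (x.1 = y.1 ∧ H.Adj x.2 y.2)
  symm := ⟨by rintro ⟨g, h⟩ ⟨g', h'⟩ (hadj | ⟨rfl, hadj⟩)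
              · exact Or.inl hadj.symm
              · exact Or.inr ⟨rfl, hadj.symm⟩⟩
  loopless := ⟨by rintro ⟨g, h⟩ (hadj | ⟨-, hadj⟩)
                  · exact G.loopless.irrefl g hadj
                  · exact H.loopless.irrefl h hadj⟩

/-- Corona product `G ⊙ H`: vertex `(g, none)` is the vertex `g` of `G`, and
`(g, some h)` is the vertex `h` of the copy of `H` attached to `g`. -/
def corona (G : SimpleGraph V) (H : SimpleGraph W) : SimpleGraph (V × Option W) where
  Adj x y := match x, y with
    | (g, none), (g', none) => G.Adj g g'
    | (g, none), (g', some _) => g = g'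
    | (g, some _), (g', none) => g = g'
    | (g, some h), (g', some h') => g = g' ∧ H.Adj h h'
  symm := ⟨by rintro ⟨g, (_ | h)⟩ ⟨g', (_ | h')⟩ hadj <;>
             simp_all [SimpleGraph.adj_comm, eq_comm]⟩
  loopless := ⟨by rintro ⟨g, (_ | h)⟩ hadj <;> simp_all⟩

/-- The closed neighborhood of a vertex. -/
def closedNbhd (G : SimpleGraph V) (u : V) : Set V :=
  insert u (G.neighborSet u)

/-- `u` and `v` are false twins: equal open neighborhoods. -/
def FalseTwin (G : SimpleGraph V) (u v : V) : Prop :=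
  G.neighborSet u = G.neighborSet v

/-- `u` and `v` are true twins: equal closed neighborhoods. -/
def TrueTwin (G : SimpleGraph V) (u v : V) : Prop :=
  closedNbhd G u = closedNbhd G v

/-- The union of the closed neighborhoods of the two endpoints of an edge. -/
def edgeNbhd (G : SimpleGraph V) : Sym2 V → Set V :=
  Sym2.lift ⟨fun a b => closedNbhd G a ∪ closedNbhd G b, fun _ _ => Set.union_comm _ _⟩

/-- Two edges are twin edges: `N[u] ∪ N[v] = N[x] ∪ N[y]`. -/
def TwinEdges (G : SimpleGraph V) (e f : Sym2 V) : Prop :=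
  edgeNbhd G e = edgeNbhd G f

/-- The set of edges lying in nontrivial edge-twin classes. -/
def nontrivTwinEdges (G : SimpleGraph V) : Set (Sym2 V) :=
  {e ∈ G.edgeSet | ∃ f ∈ G.edgeSet, f ≠ e ∧ TwinEdges G e f}

/-- `q(G)`: the number of edges lying in nontrivial edge-twin classes. -/
noncomputable def qval (G : SimpleGraph V) : ℕ := (nontrivTwinEdges G).ncard

/-- `q'(G) = q(G) - m`, where `m` is the number of nontrivial edge-twin classes. -/
noncomputable def q'val (G : SimpleGraph V) : ℕ :=
  qval G - (edgeNbhd G '' nontrivTwinEdges G).ncard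

/-- The set of vertices lying in nontrivial false-twin classes. -/
def nontrivFalseTwins (G : SimpleGraph V) : Set V :=
  {v | ∃ u, u ≠ v ∧ FalseTwin G u v}

/-- The set of vertices lying in nontrivial true-twin classes. -/
def nontrivTrueTwins (G : SimpleGraph V) : Set V :=
  {v | ∃ u, u ≠ v ∧ TrueTwin G u v}

/-- `f'(G) = f(G) - k`: vertices in nontrivial false-twin classes minus the
number of such classes. -/
noncomputable def f'val (G : SimpleGraph V) : ℕ :=
  (nontrivFalseTwins G).ncard - (G.neighborSet '' nontrivFalseTwins G).ncard

/-- `t'(G) = t(G) - ℓ`: vertices in nontrivial true-twin classes minus the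
number of such classes. -/
noncomputable def t'val (G : SimpleGraph V) : ℕ :=
  (nontrivTrueTwins G).ncard - (closedNbhd G '' nontrivTrueTwins G).ncard

/-- A set of representatives for the twin deletion operation: it contains
exactly one vertex from each (false- or true-) twin equivalence class. -/
def IsTwinDeletionSet (G : SimpleGraph V) (R : Set V) : Prop :=
  ∀ v : V, ∃! r : V, r ∈ R ∧ (FalseTwin G v r ∨ TrueTwin G v r)


/-!
A set missing only one vertex `u` is always an edge metric generator: two distinct edges differ in
an endpoint other than `u`, which is at distance `0` from one edge and not from the other.
Conversely, in `G ∨ H` any two vertices `a ≠ b` have a common neighbour `c` such that every other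
vertex is adjacent to both edges `ac` and `bc`; so these edges are seen at the same distance from
everywhere except `a` and `b`, and a generator must miss at most one vertex. When `a ∈ V(G)` and
`b ∈ V(H)`, the vertex `c` is the partner of `a` in a total dominating pair `{a, c}` of `G ∈ 𝒢`
(or of `b`, if `H ∈ 𝒢`).
-/

theorem Sym2.exists_mem_not_iff_mem_of_ne {α : Type*} {e₁ e₂ : Sym2 α} (h₁ : ¬e₁.IsDiag)
    (h₂ : ¬e₂.IsDiag) (hne : e₁ ≠ e₂) (u : α) : ∃ w ≠ u, ¬(w ∈ e₁ ↔ w ∈ e₂) := by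
  induction e₁ using Sym2.ind with | h x y => ?_
  induction e₂ using Sym2.ind with | h p q => ?_
  by_contra! h
  simp only [Sym2.mk_isDiag_iff, Sym2.mem_iff, ne_eq, Sym2.eq_iff] at *
  have := h x; have := h y; have := h p; have := h q
  grind

section EdgeDist

variable {U : Type*} (G : SimpleGraph U)

theorem edgeDist_mk (w x y : U) : edgeDist G w s(x, y) = min (G.edist w x) (G.edist w y) := rfl

theorem edgeDist_eq_zero_iff {w : U} {e : Sym2 U} : edgeDist G w e = 0 ↔ w ∈ e := by
  induction e using Sym2.ind with | h x y => ?_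
  rw [edgeDist_mk, ← bot_eq_zero, min_eq_bot, bot_eq_zero]
  simp [edist_eq_zero_iff]

theorem edgeDist_eq_one {w x y : U} (hx : w ≠ x) (hy : w ≠ y) (h : G.Adj w x ∨ G.Adj w y) :
    edgeDist G w s(x, y) = 1 := by
  have one_le {z} (hz : w ≠ z) : 1 ≤ G.edist w z :=
    Order.one_le_iff_ne_zero.mpr (edist_eq_zero_iff.not.mpr hz)
  rcases h with h | h
  · rw [edgeDist_mk, edist_eq_one_iff_adj.mpr h, min_eq_left (one_le hy)]
  · rw [edgeDist_mk, edist_eq_one_iff_adj.mpr h, min_eq_right (one_le hx)]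

theorem isEdgeMetricGenerator_compl_singleton (u : U) : IsEdgeMetricGenerator G {u}ᶜ := by
  intro e₁ he₁ e₂ he₂ hne
  obtain ⟨w, hwu, hw⟩ :=
    Sym2.exists_mem_not_iff_mem_of_ne (G.not_isDiag_of_mem_edgeSet he₁)
      (G.not_isDiag_of_mem_edgeSet he₂) hne u
  refine ⟨w, hwu, fun h => hw ?_⟩
  rw [← edgeDist_eq_zero_iff G, ← edgeDist_eq_zero_iff G, h]

/-- The edges `ac` and `bc` are at distance `1` from every vertex other than `a`, `b`, `c`. -/
def IsDominatingCommonNbr (a b c : U) : Prop :=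
  G.Adj a c ∧ G.Adj b c ∧
    ∀ w, w ≠ a → w ≠ b → w ≠ c → (G.Adj w a ∨ G.Adj w c) ∧ (G.Adj w b ∨ G.Adj w c)

variable {G}

theorem IsDominatingCommonNbr.symm {a b c : U} (h : IsDominatingCommonNbr G a b c) :
    IsDominatingCommonNbr G b a c :=
  ⟨h.2.1, h.1, fun w hb ha hc => (h.2.2 w ha hb hc).symm⟩

theorem IsDominatingCommonNbr.edgeDist_eq {a b c : U} (h : IsDominatingCommonNbr G a b c)
    {w : U} (ha : w ≠ a) (hb : w ≠ b) : edgeDist G w s(a, c) = edgeDist G w s(b, c) := by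
  by_cases hc : w = c
  · rw [(edgeDist_eq_zero_iff G).mpr (hc ▸ Sym2.mem_mk_right a w),
      (edgeDist_eq_zero_iff G).mpr (hc ▸ Sym2.mem_mk_right b w)]
  · obtain ⟨hac, hbc⟩ := h.2.2 w ha hb hc
    rw [edgeDist_eq_one G ha hc hac, edgeDist_eq_one G hb hc hbc]

theorem IsDominatingCommonNbr.not_isEdgeMetricGenerator {a b c : U} {S : Set U}
    (h : IsDominatingCommonNbr G a b c) (hab : a ≠ b) (ha : a ∉ S) (hb : b ∉ S) :
    ¬IsEdgeMetricGenerator G S := by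
  intro hS
  obtain ⟨w, hwS, hw⟩ := hS s(a, c) h.1 s(b, c) h.2.1 (by simp [hab, h.1.ne])
  exact hw (h.edgeDist_eq (ne_of_mem_of_not_mem hwS ha) (ne_of_mem_of_not_mem hwS hb))

end EdgeDist

section Join

variable {G : SimpleGraph V} {H : SimpleGraph W}

@[simp] theorem joinGraph_adj_inl_inl {a b : V} :
    (joinGraph G H).Adj (.inl a) (.inl b) ↔ G.Adj a b := Iff.rfl

@[simp] theorem joinGraph_adj_inr_inr {a b : W} :
    (joinGraph G H).Adj (.inr a) (.inr b) ↔ H.Adj a b := Iff.rfl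

@[simp] theorem joinGraph_adj_inl_inr {a : V} {b : W} :
    (joinGraph G H).Adj (.inl a) (.inr b) := trivial

@[simp] theorem joinGraph_adj_inr_inl {a : W} {b : V} :
    (joinGraph G H).Adj (.inr a) (.inl b) := trivial

theorem isDominatingCommonNbr_join_inl_inl (a b : V) (c : W) :
    IsDominatingCommonNbr (joinGraph G H) (.inl a) (.inl b) (.inr c) := by
  refine ⟨trivial, trivial, ?_⟩
  rintro (w | w) <;> simp

theorem isDominatingCommonNbr_join_inr_inr (a b : W) (c : V) :
    IsDominatingCommonNbr (joinGraph G H) (.inr a) (.inr b) (.inl c) := by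
  refine ⟨trivial, trivial, ?_⟩
  rintro (w | w) <;> simp

theorem IsTotalDomSet.adj_or_adj {a c : V} (h : IsTotalDomSet G {a, c}) (w : V) :
    G.Adj w a ∨ G.Adj w c := by
  obtain ⟨d, hd, hwd⟩ := h w
  rcases hd with rfl | rfl
  exacts [.inl hwd, .inr hwd]

theorem IsTotalDomSet.isDominatingCommonNbr_join_inl {a c : V} (hac : G.Adj a c)
    (h : IsTotalDomSet G {a, c}) (b : W) :
    IsDominatingCommonNbr (joinGraph G H) (.inl a) (.inr b) (.inl c) := by
  refine ⟨hac, trivial, ?_⟩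
  rintro (w | w) - - -
  · simpa using h.adj_or_adj w
  · simp

theorem IsTotalDomSet.isDominatingCommonNbr_join_inr {b c : W} (hbc : H.Adj b c)
    (h : IsTotalDomSet H {b, c}) (a : V) :
    IsDominatingCommonNbr (joinGraph G H) (.inr b) (.inl a) (.inr c) := by
  refine ⟨hbc, trivial, ?_⟩
  rintro (w | w) - - -
  · simp
  · simpa using h.adj_or_adj w

theorem exists_isDominatingCommonNbr_join_inl_inr (hclass : InClassG G ∨ InClassG H)
    (a : V) (b : W) : ∃ c, IsDominatingCommonNbr (joinGraph G H) (.inl a) (.inr b) c := by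
  rcases hclass with hG | hH
  · obtain ⟨c, hac, hdom, -⟩ := hG a
    exact ⟨_, hdom.isDominatingCommonNbr_join_inl hac b⟩
  · obtain ⟨c, hbc, hdom, -⟩ := hH b
    exact ⟨_, (hdom.isDominatingCommonNbr_join_inr hbc a).symm⟩

theorem exists_isDominatingCommonNbr_join [Nonempty V] [Nonempty W]
    (hclass : InClassG G ∨ InClassG H) (a b : V ⊕ W) :
    ∃ c, IsDominatingCommonNbr (joinGraph G H) a b c := by
  rcases a with a | a <;> rcases b with b | b
  · exact ⟨_, isDominatingCommonNbr_join_inl_inl a b (Classical.arbitrary W)⟩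
  · exact exists_isDominatingCommonNbr_join_inl_inr hclass a b
  · obtain ⟨c, hc⟩ := exists_isDominatingCommonNbr_join_inl_inr hclass b a
    exact ⟨c, hc.symm⟩
  · exact ⟨_, isDominatingCommonNbr_join_inr_inr a b (Classical.arbitrary V)⟩

theorem IsEdgeMetricGenerator.subsingleton_compl_join [Nonempty V] [Nonempty W]
    (hclass : InClassG G ∨ InClassG H) {S : Set (V ⊕ W)}
    (hS : IsEdgeMetricGenerator (joinGraph G H) S) : Sᶜ.Subsingleton := by
  intro a ha b hb
  by_contra hab
  obtain ⟨c, hc⟩ := exists_isDominatingCommonNbr_join hclass a b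
  exact hc.not_isEdgeMetricGenerator hab ha hb hS

end Join

theorem edim_join_of_classG {V W : Type*} [Fintype V] [Fintype W]
    (G : SimpleGraph V) (H : SimpleGraph W)
    (hG : 2 ≤ Fintype.card V) (hH : 2 ≤ Fintype.card W)
    (hclass : InClassG G ∨ InClassG H) :
    edim (joinGraph G H) = Fintype.card V + Fintype.card W - 1 := by
  have : Nonempty V := Fintype.card_pos_iff.mp (by omega)
  have : Nonempty W := Fintype.card_pos_iff.mp (by omega)
  have hcard (S : Set (V ⊕ W)) : S.ncard + Sᶜ.ncard = Fintype.card V + Fintype.card W := by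
    rw [Set.ncard_add_ncard_compl, Nat.card_eq_fintype_card, Fintype.card_sum]
  obtain ⟨a⟩ := ‹Nonempty V›
  refine IsLeast.csInf_eq ⟨⟨{.inl a}ᶜ, ?_, isEdgeMetricGenerator_compl_singleton _ _⟩, ?_⟩
  · have := hcard {.inl a}ᶜ
    rw [compl_compl, Set.ncard_singleton] at this
    omega
  · rintro _ ⟨S, rfl, hS⟩
    have := Set.ncard_le_one_iff_subsingleton.mpr (hS.subsingleton_compl_join hclass)
    have := hcard S
    omega
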